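/- Let k ≥ 1 be an integer and let G be an edge-colored graph with |V(G)| ≥ 12k² + 4k and average color degree d̂(G) ≥ 2k. Then G contains a rainbow matching of size k. -/

import Mathlib

/-- The color degree of a vertex `v`: the number of distinct colors appearing
on edges of `G` incident to `v`. -/
noncomputable def colorDegree {V : Type*} (G : SimpleGraph V) (c : Sym2 V → ℕ) (v : V) : ℕ :=
  (c '' {e : Sym2 V | e ∈ G.edgeSet ∧ v ∈ e}).ncard

/-- `M` is a rainbow matching in the edge-colored graph `(G, c)`:
a set of edges of `G`, pairwise vertex-disjoint, with pairwise distinct colors. -/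
def IsRainbowMatching {V : Type*} (G : SimpleGraph V) (c : Sym2 V → ℕ)
    (M : Finset (Sym2 V)) : Prop :=
  ↑M ⊆ G.edgeSet ∧
  (∀ e ∈ M, ∀ f ∈ M, e ≠ f → ∀ v : V, v ∈ e → v ∉ f) ∧
  Set.InjOn c ↑M

/-!
Induct on `k`. If some vertex `x` has color degree at least `3k`, delete the edges at `x`: the
total color degree drops by at most `2|V|`, so induction yields a rainbow `(k - 1)`-matching `M`
avoiding `x`, and `x` still has an edge to a vertex outside `M` in a color not used by `M`.
Otherwise all color degrees are below `3k`, and averaging gives at least `4k` vertices of color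
degree at least `2k`. A maximum rainbow matching `M` with `|M| < k` is then impossible: each such
vertex outside `V(M)` gets all colors not on `M` from edges into `V(M)`, so some edge `xy ∈ M`
receives two distinct such colors from it. By pigeonhole three of these vertices share an edge
`xy`, two of them, `u ≠ w`, have `c(ux) ≠ c(wy)`, and replacing `xy` by `ux, wy` enlarges `M`.
-/

open Finset SimpleGraph

theorem card_le_card_filter_mul_of_mul_card_le_sum {ι : Type*} (s : Finset ι) (f : ι → ℕ)
    {a b : ℕ} (hf : ∀ i ∈ s, f i ≤ a + b) (hsum : a * #s ≤ ∑ i ∈ s, f i) :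
    #s ≤ #(s.filter fun i => a ≤ f i) * (b + 1) := by
  have hpt : ∀ i ∈ s, f i + 1 ≤ a + if a ≤ f i then b + 1 else 0 := by
    intro i hi
    have := hf i hi
    split_ifs <;> omega
  have := sum_le_sum hpt
  rw [sum_add_distrib, sum_add_distrib, ← sum_filter, sum_const, sum_const, sum_const,
    smul_eq_mul, smul_eq_mul, smul_eq_mul] at this
  linarith

section RainbowMatching

variable {V : Type*} {G H : SimpleGraph V} {c : Sym2 V → ℕ}

section ColorDegree

variable [Fintype V]

theorem colorDegree_eq_card_image [DecidableRel G.Adj] (v : V) :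
    colorDegree G c v = #((G.neighborFinset v).image fun z => c s(v, z)) := by
  rw [colorDegree, ← Set.ncard_coe_finset, coe_image]
  congr 1
  ext γ
  simp only [Set.mem_image, Set.mem_ofPred_eq, coe_neighborFinset, mem_neighborSet]
  constructor
  · rintro ⟨e, ⟨he, hve⟩, rfl⟩
    obtain ⟨z, rfl⟩ := Sym2.mem_iff_exists.1 hve
    exact ⟨z, he, rfl⟩
  · rintro ⟨z, hz, rfl⟩
    exact ⟨s(v, z), ⟨hz, Sym2.mem_mk_left v z⟩, rfl⟩

theorem colorDegree_lt_card (v : V) : colorDegree G c v < Fintype.card V := by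
  classical
  rw [colorDegree_eq_card_image]
  exact card_image_le.trans_lt (G.degree_lt_card_verts v)

theorem colorDegree_le_colorDegree_deleteIncidenceSet_add_one {x w : V} (hw : w ≠ x) :
    colorDegree G c w ≤ colorDegree (G.deleteIncidenceSet x) c w + 1 := by
  classical
  rw [colorDegree_eq_card_image, colorDegree_eq_card_image]
  refine (card_le_card fun γ hγ => ?_).trans (card_insert_le (c s(w, x)) _)
  obtain ⟨z, hz, rfl⟩ := mem_image.1 hγ
  rw [mem_neighborFinset] at hz
  rcases eq_or_ne z x with rfl | hzx
  · exact mem_insert_self _ _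
  · refine mem_insert_of_mem (mem_image_of_mem _ ?_)
    rw [mem_neighborFinset, deleteIncidenceSet_adj]
    exact ⟨hz, hw, hzx⟩

theorem sum_colorDegree_le_sum_colorDegree_deleteIncidenceSet_add (x : V) :
    ∑ w, colorDegree G c w ≤
      ∑ w, colorDegree (G.deleteIncidenceSet x) c w + 2 * Fintype.card V := by
  classical
  have hx := (colorDegree_lt_card (G := G) (c := c) x).le
  have hrest : ∑ w ∈ univ.erase x, colorDegree G c w ≤
      ∑ w ∈ univ.erase x, (colorDegree (G.deleteIncidenceSet x) c w + 1) :=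
    sum_le_sum fun w hw =>
      colorDegree_le_colorDegree_deleteIncidenceSet_add_one (ne_of_mem_erase hw)
  have hle : ∑ w ∈ univ.erase x, colorDegree (G.deleteIncidenceSet x) c w ≤
      ∑ w, colorDegree (G.deleteIncidenceSet x) c w :=
    sum_le_sum_of_subset (erase_subset x univ)
  rw [sum_add_distrib, sum_const, smul_eq_mul, mul_one, card_erase_of_mem (mem_univ x),
    card_univ] at hrest
  rw [← add_sum_erase univ _ (mem_univ x)]
  omega

end ColorDegree

theorem isRainbowMatching_empty : IsRainbowMatching G c ∅ := by
  simp [IsRainbowMatching]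

namespace IsRainbowMatching

variable {M : Finset (Sym2 V)}

theorem subset (hM : IsRainbowMatching G c M) {M' : Finset (Sym2 V)} (h : M' ⊆ M) :
    IsRainbowMatching G c M' :=
  ⟨(coe_subset.2 h).trans hM.1, fun e he f hf => hM.2.1 e (h he) f (h hf),
    hM.2.2.mono (coe_subset.2 h)⟩

theorem mono (hM : IsRainbowMatching G c M) (hGH : G ≤ H) : IsRainbowMatching H c M :=
  ⟨hM.1.trans (edgeSet_mono hGH), hM.2⟩

theorem adj (hM : IsRainbowMatching G c M) {x y : V} (h : s(x, y) ∈ M) : G.Adj x y :=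
  hM.1 h

end IsRainbowMatching

variable (G c) in
def IsMaximumRainbowMatching (M : Finset (Sym2 V)) : Prop :=
  IsRainbowMatching G c M ∧ ∀ M', IsRainbowMatching G c M' → #M' ≤ #M

variable (G c) in
theorem exists_isMaximumRainbowMatching [Finite V] : ∃ M, IsMaximumRainbowMatching G c M := by
  obtain ⟨M, hM, hmax⟩ := Set.exists_max_image {M | IsRainbowMatching G c M} Finset.card
    (Set.toFinite _) ⟨∅, isRainbowMatching_empty⟩
  exact ⟨M, hM, hmax⟩

section Matching

variable [DecidableEq V] {M : Finset (Sym2 V)}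

def matchingVerts (M : Finset (Sym2 V)) : Finset V := M.biUnion Sym2.toFinset

@[simp]
theorem mem_matchingVerts {v : V} : v ∈ matchingVerts M ↔ ∃ e ∈ M, v ∈ e := by
  simp [matchingVerts]

theorem card_matchingVerts_le (M : Finset (Sym2 V)) : #(matchingVerts M) ≤ 2 * #M := by
  rw [mul_comm]
  refine card_biUnion_le_card_mul _ _ _ fun e _ => ?_
  rw [Sym2.card_toFinset]
  split_ifs <;> omega

theorem matchingVerts_mono {M' : Finset (Sym2 V)} (h : M' ⊆ M) :
    matchingVerts M' ⊆ matchingVerts M :=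
  biUnion_subset_biUnion_of_subset_left _ h

theorem matchingVerts_insert (e : Sym2 V) (M : Finset (Sym2 V)) :
    matchingVerts (insert e M) = e.toFinset ∪ matchingVerts M :=
  biUnion_insert

theorem card_insert_of_notMem_matchingVerts {u : V} (w : V) (hu : u ∉ matchingVerts M) :
    #(insert s(u, w) M) = #M + 1 :=
  card_insert_of_notMem fun h => hu (mem_matchingVerts.2 ⟨_, h, Sym2.mem_mk_left u w⟩)

namespace IsRainbowMatching

theorem notMem_matchingVerts_erase (hM : IsRainbowMatching G c M) {e : Sym2 V} (he : e ∈ M)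
    {x : V} (hx : x ∈ e) : x ∉ matchingVerts (M.erase e) := by
  simp only [mem_matchingVerts, mem_erase, not_exists, not_and]
  exact fun f ⟨hfe, hf⟩ hxf => hM.2.1 e he f hf (Ne.symm hfe) x hx hxf

theorem insert (hM : IsRainbowMatching G c M) {u w : V} (huw : G.Adj u w)
    (hu : u ∉ matchingVerts M) (hw : w ∉ matchingVerts M) (hc : c s(u, w) ∉ M.image c) :
    IsRainbowMatching G c (insert s(u, w) M) := by
  have hdisj : ∀ f ∈ M, ∀ v ∈ s(u, w), v ∉ f := by
    intro f hf v hv hvf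
    rcases Sym2.mem_iff.1 hv with rfl | rfl
    exacts [hu (mem_matchingVerts.2 ⟨f, hf, hvf⟩), hw (mem_matchingVerts.2 ⟨f, hf, hvf⟩)]
  refine ⟨?_, ?_, ?_⟩
  · rw [coe_insert, Set.insert_subset_iff]
    exact ⟨huw, hM.1⟩
  · simp only [mem_insert]
    rintro e (rfl | he) f (rfl | hf) hef v hve hvf
    · exact hef rfl
    · exact hdisj f hf v hve hvf
    · exact hdisj e he v hvf hve
    · exact hM.2.1 e he f hf hef v hve hvf
  · have hnew : s(u, w) ∉ M := fun h => hu (mem_matchingVerts.2 ⟨_, h, Sym2.mem_mk_left u w⟩)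
    rw [coe_insert, Set.injOn_insert hnew]
    exact ⟨hM.2.2, fun h => hc (by simpa using h)⟩

theorem exchange (hM : IsRainbowMatching G c M) {x y u w : V} (he : s(x, y) ∈ M) (huw : u ≠ w)
    (hu : u ∉ matchingVerts M) (hw : w ∉ matchingVerts M) (hux : G.Adj u x) (hwy : G.Adj w y)
    (hcu : c s(u, x) ∉ M.image c) (hcw : c s(w, y) ∉ M.image c) (hc : c s(u, x) ≠ c s(w, y)) :
    ∃ M', IsRainbowMatching G c M' ∧ #M' = #M + 1 := by
  set M₁ := M.erase s(x, y)
  set M₂ := Insert.insert s(w, y) M₁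
  have hV₁ : matchingVerts M₁ ⊆ matchingVerts M := matchingVerts_mono (erase_subset _ _)
  have hC₁ : M₁.image c ⊆ M.image c := image_subset_image (erase_subset _ _)
  have hx : x ∈ matchingVerts M := mem_matchingVerts.2 ⟨_, he, Sym2.mem_mk_left x y⟩
  have hy : y ∈ matchingVerts M := mem_matchingVerts.2 ⟨_, he, Sym2.mem_mk_right x y⟩
  have hw₁ : w ∉ matchingVerts M₁ := fun h => hw (hV₁ h)
  have hM₂ : IsRainbowMatching G c M₂ := (hM.subset (erase_subset _ _)).insert hwy hw₁
    (hM.notMem_matchingVerts_erase he (Sym2.mem_mk_right x y)) (fun h => hcw (hC₁ h))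
  have hu₂ : u ∉ matchingVerts M₂ := by
    simp only [M₂, matchingVerts_insert, mem_union, Sym2.mem_toFinset, Sym2.mem_iff]
    rintro ((rfl | rfl) | h)
    exacts [huw rfl, hu hy, hu (hV₁ h)]
  have hx₂ : x ∉ matchingVerts M₂ := by
    simp only [M₂, matchingVerts_insert, mem_union, Sym2.mem_toFinset, Sym2.mem_iff]
    rintro ((rfl | rfl) | h)
    exacts [hw hx, (hM.adj he).ne rfl,
      hM.notMem_matchingVerts_erase he (Sym2.mem_mk_left x y) h]
  have hc₂ : c s(u, x) ∉ M₂.image c := by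
    rw [image_insert, mem_insert]
    rintro (h | h)
    exacts [hc h, hcu (hC₁ h)]
  refine ⟨_, hM₂.insert hux hu₂ hx₂ hc₂, ?_⟩
  rw [card_insert_of_notMem_matchingVerts _ hu₂, card_insert_of_notMem_matchingVerts _ hw₁,
    card_erase_of_mem he]
  have := card_pos.2 ⟨_, he⟩
  omega

theorem notMem_matchingVerts_of_deleteIncidenceSet {x : V}
    (hM : IsRainbowMatching (G.deleteIncidenceSet x) c M) : x ∉ matchingVerts M := by
  intro hx
  obtain ⟨e, he, hxe⟩ := mem_matchingVerts.1 hx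
  obtain ⟨z, rfl⟩ := Sym2.mem_iff_exists.1 hxe
  exact (deleteIncidenceSet_adj.1 (hM.adj he)).2.1 rfl

theorem exists_card_eq_add_one_of_colorDegree [Fintype V]
    (hM : IsRainbowMatching G c M) {v : V} (hv : v ∉ matchingVerts M)
    (hdeg : #(matchingVerts M) + #M < colorDegree G c v) :
    ∃ M', IsRainbowMatching G c M' ∧ #M' = #M + 1 := by
  classical
  by_contra! hno
  have hsub : (G.neighborFinset v).image (fun z => c s(v, z)) ⊆
      (matchingVerts M).image (fun z => c s(v, z)) ∪ M.image c := by
    intro γ hγ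
    obtain ⟨z, hz, rfl⟩ := mem_image.1 hγ
    by_cases hzM : z ∈ matchingVerts M
    · exact mem_union_left _ (mem_image_of_mem _ hzM)
    · refine mem_union_right _ ?_
      by_contra hcz
      exact hno _ (hM.insert ((mem_neighborFinset G v z).1 hz) hv hzM hcz)
        (card_insert_of_notMem_matchingVerts _ hv)
  have hcard := (card_le_card hsub).trans (card_union_le _ _)
  rw [← colorDegree_eq_card_image] at hcard
  have := card_image_le (s := matchingVerts M) (f := fun z => c s(v, z))
  have := card_image_le (s := M) (f := c)
  omega

end IsRainbowMatching

namespace IsMaximumRainbowMatching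

theorem color_mem_image (hM : IsMaximumRainbowMatching G c M) {v z : V} (hvz : G.Adj v z)
    (hv : v ∉ matchingVerts M) (hz : z ∉ matchingVerts M) : c s(v, z) ∈ M.image c := by
  by_contra hc
  have := hM.2 _ (hM.1.insert hvz hv hz hc)
  rw [card_insert_of_notMem_matchingVerts _ hv] at this
  omega

theorem exists_two_new_colors [Fintype V] (hM : IsMaximumRainbowMatching G c M) {v : V}
    (hv : v ∉ matchingVerts M) (hdeg : 2 * #M < colorDegree G c v) :
    ∃ e ∈ M, ∀ x ∈ e, ∀ y ∈ e, x ≠ y →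
      G.Adj v x ∧ c s(v, x) ∉ M.image c ∧ c s(v, x) ≠ c s(v, y) := by
  classical
  set f : V → ℕ := fun z => c s(v, z)
  set T : Sym2 V → Finset ℕ := fun e =>
    ((G.neighborFinset v).filter (· ∈ e)).image f \ M.image c
  have hcover : (G.neighborFinset v).image f \ M.image c ⊆ M.biUnion T := by
    intro γ hγ
    obtain ⟨hγ, hγC⟩ := mem_sdiff.1 hγ
    obtain ⟨z, hz, rfl⟩ := mem_image.1 hγ
    have hzM : z ∈ matchingVerts M := by
      by_contra hzM
      exact hγC (hM.color_mem_image ((mem_neighborFinset G v z).1 hz) hv hzM)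
    obtain ⟨e, he, hze⟩ := mem_matchingVerts.1 hzM
    refine mem_biUnion.2 ⟨e, he, mem_sdiff.2 ⟨?_, hγC⟩⟩
    exact mem_image_of_mem f (mem_filter.2 ⟨hz, hze⟩)
  obtain ⟨e, he, hTe⟩ : ∃ e ∈ M, 1 < #(T e) := by
    by_contra! hT
    have h₁ := (card_le_card hcover).trans (card_biUnion_le_card_mul _ _ 1 hT)
    have h₂ := le_card_sdiff (M.image c) ((G.neighborFinset v).image f)
    have h₃ : #(M.image c) ≤ #M := card_image_le
    rw [← colorDegree_eq_card_image] at h₂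
    omega
  obtain ⟨γ₁, hγ₁, γ₂, hγ₂, hγ⟩ := one_lt_card.1 hTe
  obtain ⟨hγ₁, hC₁⟩ := mem_sdiff.1 hγ₁
  obtain ⟨hγ₂, hC₂⟩ := mem_sdiff.1 hγ₂
  obtain ⟨z₁, hz₁, rfl⟩ := mem_image.1 hγ₁
  obtain ⟨z₂, hz₂, rfl⟩ := mem_image.1 hγ₂
  obtain ⟨hz₁, hz₁e⟩ := mem_filter.1 hz₁
  obtain ⟨hz₂, hz₂e⟩ := mem_filter.1 hz₂
  rw [mem_neighborFinset] at hz₁ hz₂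
  have hz : z₁ ≠ z₂ := by
    rintro rfl
    exact hγ rfl
  refine ⟨e, he, fun x hx y hy hxy => ?_⟩
  rw [(Sym2.mem_and_mem_iff hz).1 ⟨hz₁e, hz₂e⟩, Sym2.mem_iff] at hx hy
  rcases hx with rfl | rfl <;> rcases hy with rfl | rfl
  · exact absurd rfl hxy
  · exact ⟨hz₁, hC₁, hγ⟩
  · exact ⟨hz₂, hC₂, Ne.symm hγ⟩
  · exact absurd rfl hxy

theorem card_le_two_of_two_new_colors (hM : IsMaximumRainbowMatching G c M) {x y : V}
    (he : s(x, y) ∈ M) {S : Finset V}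
    (hS : ∀ v ∈ S, v ∉ matchingVerts M ∧ ∀ a ∈ s(x, y), ∀ b ∈ s(x, y), a ≠ b →
      G.Adj v a ∧ c s(v, a) ∉ M.image c ∧ c s(v, a) ≠ c s(v, b)) :
    #S ≤ 2 := by
  have hxy : x ≠ y := (hM.1.adj he).ne
  have hsame : ∀ u ∈ S, ∀ w ∈ S, u ≠ w → c s(u, x) = c s(w, y) := by
    intro u hu w hw huw
    by_contra hc
    obtain ⟨hu, hnu⟩ := hS u hu
    obtain ⟨hw, hnw⟩ := hS w hw
    obtain ⟨hux, hcu, -⟩ := hnu x (Sym2.mem_mk_left x y) y (Sym2.mem_mk_right x y) hxy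
    obtain ⟨hwy, hcw, -⟩ := hnw y (Sym2.mem_mk_right x y) x (Sym2.mem_mk_left x y) hxy.symm
    obtain ⟨M', hM', hcard⟩ := hM.1.exchange he huw hu hw hux hwy hcu hcw hc
    have := hM.2 M' hM'
    omega
  by_contra! h
  -- three vertices of `S` would force `c s(v₁, x) = c s(v₃, y) = c s(v₂, x) = c s(v₁, y)`
  obtain ⟨v₁, h₁, v₂, h₂, v₃, h₃, h₁₂, h₁₃, h₂₃⟩ := two_lt_card.1 h
  have := hsame v₁ h₁ v₃ h₃ h₁₃
  have := hsame v₂ h₂ v₃ h₃ h₂₃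
  have := hsame v₂ h₂ v₁ h₁ h₁₂.symm
  exact ((hS v₁ h₁).2 x (Sym2.mem_mk_left x y) y (Sym2.mem_mk_right x y) hxy).2.2 (by omega)

theorem card_filter_lt_colorDegree_le [Fintype V] (hM : IsMaximumRainbowMatching G c M) :
    #((matchingVerts M)ᶜ.filter fun v => 2 * #M < colorDegree G c v) ≤ 2 * #M := by
  set R := (matchingVerts M)ᶜ.filter fun v => 2 * #M < colorDegree G c v
  by_contra! hR
  have hmem : ∀ v ∈ R, v ∉ matchingVerts M ∧ 2 * #M < colorDegree G c v := by
    simp [R]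
  have hnew : ∀ v ∈ R, ∃ e ∈ M, ∀ a ∈ e, ∀ b ∈ e, a ≠ b →
      G.Adj v a ∧ c s(v, a) ∉ M.image c ∧ c s(v, a) ≠ c s(v, b) :=
    fun v hv => hM.exists_two_new_colors (hmem v hv).1 (hmem v hv).2
  obtain ⟨v₀, -⟩ : R.Nonempty := card_pos.1 (by omega)
  -- lets `choose!` produce a total function `F`
  have : Nonempty (Sym2 V) := ⟨s(v₀, v₀)⟩
  choose! F hFM hF using hnew
  obtain ⟨e, he, hfib⟩ := exists_lt_card_fiber_of_mul_lt_card_of_maps_to hFM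
    (by rwa [mul_comm] : #M * 2 < #R)
  obtain ⟨x, y, rfl⟩ : ∃ x y, e = s(x, y) := Sym2.ind (fun x y => ⟨x, y, rfl⟩) e
  refine hfib.not_ge (hM.card_le_two_of_two_new_colors he fun v hv => ?_)
  obtain ⟨hvR, hvF⟩ := mem_filter.1 hv
  exact ⟨(hmem v hvR).1, hvF ▸ hF v hvR⟩

end IsMaximumRainbowMatching

theorem exists_rainbowMatching_of_le_card_filter [Fintype V] (k : ℕ)
    (h : 4 * k ≤ #(univ.filter fun v => 2 * k ≤ colorDegree G c v)) :
    ∃ M, IsRainbowMatching G c M ∧ #M = k := by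
  obtain ⟨M, hM⟩ := exists_isMaximumRainbowMatching G c
  rcases le_or_gt k #M with hk | hk
  · obtain ⟨M', hM', rfl⟩ := exists_subset_card_eq hk
    exact ⟨M', hM.1.subset hM', rfl⟩
  · have hsub : (univ.filter fun v => 2 * k ≤ colorDegree G c v) \ matchingVerts M ⊆
        (matchingVerts M)ᶜ.filter fun v => 2 * #M < colorDegree G c v := by
      intro v hv
      simp only [mem_sdiff, mem_filter, mem_univ, true_and, mem_compl] at hv ⊢
      exact ⟨hv.2, by omega⟩
    have := le_card_sdiff (matchingVerts M) (univ.filter fun v => 2 * k ≤ colorDegree G c v)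
    have := card_le_card hsub
    have := hM.card_filter_lt_colorDegree_le
    have := card_matchingVerts_le M
    omega

end Matching

theorem exists_rainbowMatching_of_sum_colorDegree [Fintype V] (k : ℕ) (G : SimpleGraph V)
    (c : Sym2 V → ℕ) (hn : 12 * k ^ 2 + 4 * k ≤ Fintype.card V)
    (hsum : 2 * k * Fintype.card V ≤ ∑ v, colorDegree G c v) :
    ∃ M, IsRainbowMatching G c M ∧ #M = k := by
  classical
  induction k generalizing G with
  | zero => exact ⟨∅, isRainbowMatching_empty, rfl⟩
  | succ k ih =>
    by_cases hx : ∃ x, 3 * (k + 1) ≤ colorDegree G c x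
    · obtain ⟨x, hx⟩ := hx
      have hdel := sum_colorDegree_le_sum_colorDegree_deleteIncidenceSet_add (G := G) (c := c) x
      obtain ⟨M, hM, rfl⟩ := ih (G.deleteIncidenceSet x) (by nlinarith) (by nlinarith)
      have := card_matchingVerts_le M
      exact (hM.mono (G.deleteIncidenceSet_le x)).exists_card_eq_add_one_of_colorDegree
        hM.notMem_matchingVerts_of_deleteIncidenceSet (by omega)
    · push Not at hx
      apply exists_rainbowMatching_of_le_card_filter
      have := card_le_card_filter_mul_of_mul_card_le_sum univ (colorDegree G c)
        (a := 2 * (k + 1)) (b := k) (fun v _ => by have := hx v; omega) (by rwa [card_univ])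
      rw [card_univ] at this
      by_contra! h
      nlinarith

end RainbowMatching

theorem rainbow_matching_many_vertices_avg_color_degree_general
    {V : Type*} [Fintype V] (k : ℕ)
    (G : SimpleGraph V) (c : Sym2 V → ℕ)
    (hn : 12 * k ^ 2 + 4 * k ≤ Fintype.card V)
    (havg : (2 * (k : ℚ)) ≤ (∑ v, (colorDegree G c v : ℚ)) / (Fintype.card V : ℚ)) :
    ∃ M : Finset (Sym2 V), IsRainbowMatching G c M ∧ M.card = k := by
  refine exists_rainbowMatching_of_sum_colorDegree k G c hn ?_
  rcases (Fintype.card V).eq_zero_or_pos with h0 | hpos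
  · simp [h0]
  · rw [le_div_iff₀ (by exact_mod_cast hpos)] at havg
    exact_mod_cast havg

/-- Kritschgau: every edge-colored graph on at least `12k² + 4k` vertices with average
color degree at least `2k` contains a rainbow matching of size `k`. -/
theorem rainbow_matching_many_vertices_avg_color_degree
    {V : Type*} [Fintype V] (k : ℕ) (hk : 1 ≤ k)
    (G : SimpleGraph V) (c : Sym2 V → ℕ)
    (hn : 12 * k ^ 2 + 4 * k ≤ Fintype.card V)
    (havg : (2 * (k : ℚ)) ≤ (∑ v, (colorDegree G c v : ℚ)) / (Fintype.card V : ℚ)) :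
    ∃ M : Finset (Sym2 V), IsRainbowMatching G c M ∧ M.card = k :=
  rainbow_matching_many_vertices_avg_color_degree_general k G c hn havg
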